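/- arXiv:2312.02899 — 2 statements merged into one kernel-verified Lean document; each statement's English description precedes it below -/
import Mathlib

section
/- Let B_w be a surjective weighted backward shift on ℓ^p or c₀ with forward shift S, and let (n_k) be an increasing sequence of positive integers. If for every nonzero x, S^{n_k} x → 0, then inf_n w_n > 0, lim_k M_1^{n_k} = ∞, and inf_{i,k} M_i^{n_k} > 0. -/
open Filter Topology

/-- `Mw w i k = w i * w (i+1) * ⋯ * w (i+k-1)`. -/
noncomputable def Mw (w : ℕ → ℝ) (i k : ℕ) : ℝ := ∏ t ∈ Finset.range k, w (i + t)

/-- The `n`-th power of the weighted forward shift associated to `B_w`. -/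
noncomputable def Siter (w : ℕ → ℝ) (n : ℕ) (x : ℕ → ℝ) : ℕ → ℝ :=
  fun j => if j < n then 0 else x (j - n) / Mw w (j - n + 1) n

/-! Whatever the space, `S^{n_k} x → 0` forces `(S^{n_k} x)_j → 0` uniformly in `j`, each
coordinate being dominated by the norm. For `x = c e_{i-1}` the coordinate `i - 1 + n_k` of
`S^{n_k} x` is `c / M_i^{n_k}`, so `M_i^{n_k} → ∞`. If `inf_{i,k} M_i^{n_k} = 0`, choose pairs
`(i_m, k_m)` with `k_m ≥ m` and `M_{i_m}^{n_{k_m}} < 2^{-m}` (`k_m` is necessarily large since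
`M_i^n ≥ δ^n`); a summable `x` with `x_{i_m - 1} ≥ 2^{-m}` then has, for every `m`, a coordinate of
`S^{n_{k_m}} x` exceeding `1` — a gliding hump. -/

lemma summable_abs_rpow_of_summable {p : ℝ} (hp : 1 ≤ p) {x : ℕ → ℝ} (hx : Summable x) :
    Summable fun j => |x j| ^ p := by
  refine .of_norm_bounded_eventually_nat hx.abs ?_
  filter_upwards [hx.abs.tendsto_atTop_zero.eventually_le_const one_pos] with j hj
  rw [Real.norm_eq_abs, abs_of_nonneg (by positivity)]
  exact Real.rpow_le_self_of_le_one (abs_nonneg _) hj hp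

lemma abs_le_tsum_abs_rpow_rpow {p : ℝ} (hp : 0 < p) {y : ℕ → ℝ}
    (hy : Summable fun j => |y j| ^ p) (j : ℕ) : |y j| ≤ (∑' i, |y i| ^ p) ^ (1 / p) := by
  calc |y j| = (|y j| ^ p) ^ (1 / p) := by
        rw [← Real.rpow_mul (abs_nonneg _), mul_one_div_cancel hp.ne', Real.rpow_one]
    _ ≤ _ := Real.rpow_le_rpow (by positivity)
        (hy.le_tsum j fun i _ => by positivity) (by positivity)

section WeightedShift

variable {w : ℕ → ℝ} {δ : ℝ}

lemma pow_le_Mw (hδ : 0 ≤ δ) (hδw : ∀ n, 1 ≤ n → δ ≤ w n) {i : ℕ} (hi : 1 ≤ i) (n : ℕ) :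
    δ ^ n ≤ Mw w i n := by
  simpa [Mw] using Finset.prod_le_prod (s := Finset.range n) (fun _ _ => hδ)
    fun t _ => hδw (i + t) (by omega)

lemma Mw_pos (hδ : 0 < δ) (hδw : ∀ n, 1 ≤ n → δ ≤ w n) {i : ℕ} (hi : 1 ≤ i) (n : ℕ) :
    0 < Mw w i n :=
  (pow_pos hδ n).trans_le (pow_le_Mw hδ.le hδw hi n)

lemma Siter_add (n : ℕ) (x : ℕ → ℝ) (m : ℕ) :
    Siter w n x (m + n) = x m / Mw w (m + 1) n := by
  simp [Siter]

lemma abs_Siter_le (hδ : 0 < δ) (hδw : ∀ n, 1 ≤ n → δ ≤ w n) (n : ℕ) (x : ℕ → ℝ) (j : ℕ) :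
    |Siter w n x j| ≤ |x (j - n)| / δ ^ n := by
  unfold Siter
  split_ifs with hj
  · simp only [abs_zero]; positivity
  · rw [abs_div, abs_of_pos (Mw_pos hδ hδw (by omega) n)]
    exact div_le_div_of_nonneg_left (abs_nonneg _) (pow_pos hδ n) (pow_le_Mw hδ.le hδw (by omega) n)

lemma summable_abs_Siter_rpow (hδ : 0 < δ) (hδw : ∀ n, 1 ≤ n → δ ≤ w n) {p : ℝ} (hp : 0 ≤ p)
    (n : ℕ) {x : ℕ → ℝ} (hx : Summable fun j => |x j| ^ p) :
    Summable fun j => |Siter w n x j| ^ p := by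
  have hshift : Summable fun j => |x (j - n)| ^ p / (δ ^ n) ^ p :=
    (summable_nat_add_iff n).mp (by simpa using hx.div_const ((δ ^ n) ^ p))
  refine .of_nonneg_of_le (fun _ => by positivity) (fun j => ?_) hshift
  rw [← Real.div_rpow (abs_nonneg _) (by positivity)]
  exact Real.rpow_le_rpow (abs_nonneg _) (abs_Siter_le hδ hδw n x j) hp

lemma bddAbove_range_abs_Siter (hδ : 0 < δ) (hδw : ∀ n, 1 ≤ n → δ ≤ w n) (n : ℕ) {x : ℕ → ℝ}
    (hx : BddAbove (Set.range fun j => |x j|)) :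
    BddAbove (Set.range fun j => |Siter w n x j|) := by
  obtain ⟨C, hC⟩ := hx
  refine ⟨C / δ ^ n, Set.forall_mem_range.2 fun j => (abs_Siter_le hδ hδw n x j).trans ?_⟩
  gcongr
  exact hC ⟨j - n, rfl⟩

lemma eventually_forall_abs_Siter_lt {p : ℝ} (hp : 1 ≤ p) (hδ : 0 < δ)
    (hδw : ∀ n, 1 ≤ n → δ ≤ w n) {nk : ℕ → ℕ}
    (h : (∀ x : ℕ → ℝ, Summable (fun j => |x j| ^ p) → x ≠ 0 →
            Tendsto (fun k => (∑' j, |Siter w (nk k) x j| ^ p) ^ (1 / p)) atTop (𝓝 0)) ∨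
         (∀ x : ℕ → ℝ, Tendsto x atTop (𝓝 0) → x ≠ 0 →
            Tendsto (fun k => ⨆ j, |Siter w (nk k) x j|) atTop (𝓝 0)))
    {x : ℕ → ℝ} (hx : Summable x) (hx0 : x ≠ 0) {ε : ℝ} (hε : 0 < ε) :
    ∀ᶠ k in atTop, ∀ j, |Siter w (nk k) x j| < ε := by
  rcases h with hlp | hc0
  · have hxp := summable_abs_rpow_of_summable hp hx
    filter_upwards [(hlp x hxp hx0).eventually_lt_const hε] with k hk j
    exact (abs_le_tsum_abs_rpow_rpow (by linarith)
      (summable_abs_Siter_rpow hδ hδw (by linarith) _ hxp) j).trans_lt hk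
  · have hxt := hx.tendsto_atTop_zero
    filter_upwards [(hc0 x hxt hx0).eventually_lt_const hε] with k hk j
    exact (le_ciSup (bddAbove_range_abs_Siter hδ hδw _ (by simpa using hxt.abs.bddAbove_range))
      j).trans_lt hk

lemma tendsto_Mw_atTop (hδ : 0 < δ) (hδw : ∀ n, 1 ≤ n → δ ≤ w n) {nk : ℕ → ℕ}
    (hS : ∀ x : ℕ → ℝ, Summable x → x ≠ 0 → ∀ᶠ k in atTop, ∀ j, |Siter w (nk k) x j| < 1)
    {i : ℕ} (hi : 1 ≤ i) : Tendsto (fun k => Mw w i (nk k)) atTop atTop := by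
  refine tendsto_atTop.2 fun b => ?_
  have hc : 0 < |b| + 1 := by positivity
  have hx0 : Pi.single (i - 1) (|b| + 1) ≠ (0 : ℕ → ℝ) := fun h0 =>
    hc.ne' (by simpa using congrFun h0 (i - 1))
  filter_upwards [hS _ (hasSum_pi_single (i - 1) (|b| + 1)).summable hx0] with k hk
  have hM := Mw_pos hδ hδw hi (nk k)
  have hcoord := hk (i - 1 + nk k)
  rw [Siter_add, Nat.sub_add_cancel hi, Pi.single_eq_same, abs_div, abs_of_pos hc,
    abs_of_pos hM, div_lt_one hM] at hcoord
  linarith [le_abs_self b]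

lemma exists_Mw_lt_of_le (hδ : 0 < δ) (hδw : ∀ n, 1 ≤ n → δ ≤ w n) {nk : ℕ → ℕ}
    (hmono : Monotone nk) (hinf : ∀ c > 0, ∃ i, 1 ≤ i ∧ ∃ k, Mw w i (nk k) < c)
    {c : ℝ} (hc : 0 < c) (N : ℕ) : ∃ i, 1 ≤ i ∧ ∃ k, N ≤ k ∧ Mw w i (nk k) < c := by
  set δ' := min δ 1
  obtain ⟨i, hi, k, hk⟩ := hinf (min c (δ' ^ nk N)) (by positivity)
  refine ⟨i, hi, k, ?_, hk.trans_le (min_le_left _ _)⟩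
  by_contra! hkN
  have hlow : δ' ^ nk N ≤ Mw w i (nk k) := calc
    δ' ^ nk N ≤ δ' ^ nk k := pow_le_pow_of_le_one (by positivity) (min_le_right _ _) (hmono hkN.le)
    _ ≤ Mw w i (nk k) :=
      pow_le_Mw (by positivity) (fun n hn => (min_le_left _ _).trans (hδw n hn)) hi _
  exact (hk.trans_le (min_le_right _ _)).not_ge hlow

lemma exists_pos_le_Mw (hδ : 0 < δ) (hδw : ∀ n, 1 ≤ n → δ ≤ w n) {nk : ℕ → ℕ}
    (hmono : Monotone nk)
    (hS : ∀ x : ℕ → ℝ, Summable x → x ≠ 0 → ∀ᶠ k in atTop, ∀ j, |Siter w (nk k) x j| < 1) :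
    ∃ c > 0, ∀ i, 1 ≤ i → ∀ k, c ≤ Mw w i (nk k) := by
  by_contra! hinf
  choose I hI K hK hIK using fun m : ℕ =>
    exists_Mw_lt_of_le hδ hδw hmono hinf (pow_pos (one_half_pos (α := ℝ)) m) m
  -- summing over the fibre makes repetitions among the indices `I m` harmless
  let x : ℕ → ℝ := fun j => ∑' m : (fun m => I m - 1) ⁻¹' {j}, (1 / 2 : ℝ) ^ (m : ℕ)
  have hx : Summable x := (summable_geometric_two.hasSum.tsum_fiberwise _).summable
  have hxI : ∀ m, (1 / 2 : ℝ) ^ m ≤ x (I m - 1) := fun m =>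
    (summable_geometric_two.subtype ((fun m => I m - 1) ⁻¹' {I m - 1})).le_tsum ⟨m, rfl⟩
      fun _ _ => pow_nonneg one_half_pos.le _
  have hx0 : x ≠ 0 := fun h0 => absurd (hxI 0) (by simp [h0])
  obtain ⟨N, hN⟩ := eventually_atTop.1 (hS x hx hx0)
  have hM := Mw_pos hδ hδw (hI N) (nk (K N))
  have hcoord := (le_abs_self _).trans_lt (hN (K N) (hK N) (I N - 1 + nk (K N)))
  rw [Siter_add, Nat.sub_add_cancel (hI N), div_lt_one hM] at hcoord
  linarith [hIK N, hxI N]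

end WeightedShift

theorem UH_ii_implies_iii_general (p : ℝ) (hp : 1 ≤ p)
    (w : ℕ → ℝ)
    (hsurj : ∃ δ > (0 : ℝ), ∀ n, 1 ≤ n → δ ≤ w n)
    (nk : ℕ → ℕ) (hmono : StrictMono nk)
    (h : (∀ x : ℕ → ℝ, Summable (fun j => |x j| ^ p) → x ≠ 0 →
            Tendsto (fun k => (∑' j, |Siter w (nk k) x j| ^ p) ^ (1 / p)) atTop (𝓝 0)) ∨
         (∀ x : ℕ → ℝ, Tendsto x atTop (𝓝 0) → x ≠ 0 →
            Tendsto (fun k => ⨆ j, |Siter w (nk k) x j|) atTop (𝓝 0))) :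
    (∃ δ > (0 : ℝ), ∀ n, 1 ≤ n → δ ≤ w n) ∧
    Tendsto (fun k => Mw w 1 (nk k)) atTop atTop ∧
    (∃ c > (0 : ℝ), ∀ i, 1 ≤ i → ∀ k, c ≤ Mw w i (nk k)) := by
  obtain ⟨δ, hδ, hδw⟩ := hsurj
  have hS : ∀ x : ℕ → ℝ, Summable x → x ≠ 0 → ∀ᶠ k in atTop, ∀ j, |Siter w (nk k) x j| < 1 :=
    fun x hx hx0 => eventually_forall_abs_Siter_lt hp hδ hδw h hx hx0 one_pos
  exact ⟨⟨δ, hδ, hδw⟩, tendsto_Mw_atTop hδ hδw hS le_rfl,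
    exists_pos_le_Mw hδ hδw hmono.monotone hS⟩

/-- If `B_w` is a surjective weighted backward shift on `ℓ^p` or `c₀` and `(n_k)` is an
increasing sequence such that `S^{n_k} x → 0` for every nonzero `x` in the space, then
`inf_n w_n > 0`, `M_1^{n_k} → ∞`, and `inf_{i,k} M_i^{n_k} > 0`. -/
theorem UH_ii_implies_iii (p : ℝ) (hp : 1 ≤ p)
    (w : ℕ → ℝ) (hw : ∀ n, 1 ≤ n → 0 < w n)
    (hub : ∃ C : ℝ, ∀ n, 1 ≤ n → w n ≤ C)
    (hsurj : ∃ δ > (0 : ℝ), ∀ n, 1 ≤ n → δ ≤ w n)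
    (nk : ℕ → ℕ) (hmono : StrictMono nk) (hpos : ∀ k, 1 ≤ nk k)
    (h : (∀ x : ℕ → ℝ, Summable (fun j => |x j| ^ p) → x ≠ 0 →
            Tendsto (fun k => (∑' j, |Siter w (nk k) x j| ^ p) ^ (1 / p)) atTop (𝓝 0)) ∨
         (∀ x : ℕ → ℝ, Tendsto x atTop (𝓝 0) → x ≠ 0 →
            Tendsto (fun k => ⨆ j, |Siter w (nk k) x j|) atTop (𝓝 0))) :
    (∃ δ > (0 : ℝ), ∀ n, 1 ≤ n → δ ≤ w n) ∧
    Tendsto (fun k => Mw w 1 (nk k)) atTop atTop ∧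
    (∃ c > (0 : ℝ), ∀ i, 1 ≤ i → ∀ k, c ≤ Mw w i (nk k)) :=
  UH_ii_implies_iii_general p hp w hsurj nk hmono h
end

section
/- With w defined by w_n = 2 for odd n and w_n = (2 w_{n/2})^{-1} for even n, and M_i^k = w_i ⋯ w_{i+k-1}, for every m, i, k ∈ ℕ and every j ∈ {4^m(i-1)+1, ..., 4^m i}, one has M_j^{4^m k} = M_i^k. -/
open Filter Topology

/-- The weight sequence: `w n = 2` for odd `n`, `w n = (2 * w (n/2))⁻¹` for even `n`. -/
noncomputable def petrovW : ℕ → ℝ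
  | 0 => 2
  | (n + 1) => if (n + 1) % 2 = 1 then 2 else (2 * petrovW ((n + 1) / 2))⁻¹
decreasing_by omega

/-!
Both ways of cutting the word `w_{2n-1} w_{2n} w_{2n+1}` into a pair `w_j w_{j+1}` give
`w_n⁻¹`, because `w` is `2` at odd places and `(2 w_n)⁻¹` at `2n`. Hence any product
`M_j^{2k}` collapses pair by pair to `(M_{⌈j/2⌉}^k)⁻¹`, applying this twice gives
`M_j^{4k} = M_{⌈j/4⌉}^k`, and iterating gives `M_j^{4^m k} = M_{⌈j/4^m⌉}^k`.
-/

lemma petrovW_two_mul_add_one (n : ℕ) : petrovW (2 * n + 1) = 2 := by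
  rw [petrovW, if_pos (by omega)]

lemma petrovW_two_mul_add_two (n : ℕ) : petrovW (2 * n + 2) = (2 * petrovW (n + 1))⁻¹ := by
  rw [petrovW, if_neg (by omega), show (2 * n + 1 + 1) / 2 = n + 1 by omega]

lemma petrovW_mul_petrovW_succ (j : ℕ) :
    petrovW (j + 1) * petrovW (j + 2) = (petrovW (j / 2 + 1))⁻¹ := by
  obtain ⟨n, rfl | rfl⟩ := Nat.even_or_odd' j
  · rw [petrovW_two_mul_add_one, petrovW_two_mul_add_two, Nat.mul_div_cancel_left n two_pos]
    field_simp
  · rw [show 2 * n + 1 + 1 = 2 * n + 2 by ring, show 2 * n + 1 + 2 = 2 * (n + 1) + 1 by ring,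
      petrovW_two_mul_add_one, petrovW_two_mul_add_two, show (2 * n + 1) / 2 = n by omega]
    field_simp

lemma Mw_two_mul (w : ℕ → ℝ) (i k : ℕ) :
    Mw w i (2 * k) = ∏ t ∈ Finset.range k, w (i + 2 * t) * w (i + 2 * t + 1) := by
  induction k with
  | zero => simp [Mw]
  | succ k ih =>
    rw [Finset.prod_range_succ, ← ih, Mw, Mw, show 2 * (k + 1) = 2 * k + 2 by ring,
      Finset.prod_range_add, Finset.prod_range_succ, Finset.prod_range_one, add_zero, add_assoc]

lemma Mw_petrovW_two_mul (j k : ℕ) : Mw petrovW (j + 1) (2 * k) = (Mw petrovW (j / 2 + 1) k)⁻¹ := by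
  rw [Mw_two_mul, Mw, ← Finset.prod_inv_distrib]
  refine Finset.prod_congr rfl fun t _ => ?_
  rw [show j + 1 + 2 * t + 1 = j + 2 * t + 2 by ring, add_right_comm, petrovW_mul_petrovW_succ,
    show (j + 2 * t) / 2 + 1 = j / 2 + 1 + t by omega]

lemma Mw_petrovW_four_mul (j k : ℕ) : Mw petrovW (j + 1) (4 * k) = Mw petrovW (j / 4 + 1) k := by
  rw [show 4 * k = 2 * (2 * k) by ring, Mw_petrovW_two_mul, Mw_petrovW_two_mul, inv_inv,
    Nat.div_div_eq_div_mul]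

lemma Mw_petrovW_four_pow_mul (m j k : ℕ) :
    Mw petrovW (j + 1) (4 ^ m * k) = Mw petrovW (j / 4 ^ m + 1) k := by
  induction m generalizing k with
  | zero => simp
  | succ m ih =>
    rw [pow_succ, mul_assoc, ih, Mw_petrovW_four_mul, Nat.div_div_eq_div_mul]

theorem petrovW_M_four_power_general (m i k j : ℕ)
    (hj₁ : 4 ^ m * (i - 1) + 1 ≤ j) (hj₂ : j ≤ 4 ^ m * i) :
    Mw petrovW j (4 ^ m * k) = Mw petrovW i k := by
  obtain ⟨j, rfl⟩ : ∃ j', j = j' + 1 := ⟨j - 1, by omega⟩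
  cases i with
  | zero => simp at hj₂
  | succ i =>
    rw [Nat.add_sub_cancel] at hj₁
    rw [Mw_petrovW_four_pow_mul, Nat.div_eq_of_lt_le (k := i) (by linarith) (by linarith)]

/-- For the weight sequence `petrovW`: for every `m, i, k ≥ 1` and every
`j ∈ {4^m (i-1) + 1, …, 4^m i}`, one has `M_j^{4^m k} = M_i^k`. -/
theorem petrovW_M_four_power (m i k j : ℕ) (hm : 1 ≤ m) (hi : 1 ≤ i) (hk : 1 ≤ k)
    (hj₁ : 4 ^ m * (i - 1) + 1 ≤ j) (hj₂ : j ≤ 4 ^ m * i) :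
    Mw petrovW j (4 ^ m * k) = Mw petrovW i k :=
  petrovW_M_four_power_general m i k j hj₁ hj₂
end
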